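/- arXiv:1410.1605 — 5 statements merged into one kernel-verified Lean document; each statement's English description precedes it below -/
import Mathlib

section
/- In one spatial dimension (n = m = 1) with constant coefficients f, a > 0, V: if ρ̃ : ℝ × ℝ → ℝ is smooth and satisfies the controlled Fokker–Planck equation ∂ρ̃/∂t + ∂/∂x((f - a ∂λ/∂x)ρ̃) = (a/2) ∂²ρ̃/∂x², and φ = exp(-λ) is smooth positive satisfying ∂φ/∂t + f ∂φ/∂x + (a/2) ∂²φ/∂x² = Vφ, then φ̂ := ρ̃/φ satisfies ∂φ̂/∂t + ∂/∂x(f φ̂) - (a/2) ∂²φ̂/∂x² = -V φ̂. -/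
noncomputable def px (F : ℝ → ℝ → ℝ) (x t : ℝ) : ℝ := deriv (fun y => F y t) x
noncomputable def pt (F : ℝ → ℝ → ℝ) (x t : ℝ) : ℝ := deriv (F x) t

private lemma sect_x {F : ℝ → ℝ → ℝ} (hF : ContDiff ℝ (⊤ : ℕ∞) (fun p : ℝ × ℝ => F p.1 p.2))
    (x t : ℝ) : HasDerivAt (fun y => F y t) (px F x t) x := by
  have h1 : DifferentiableAt ℝ (fun y => F y t) x := by
    have : (fun y => F y t) = (fun p : ℝ × ℝ => F p.1 p.2) ∘ (fun y => (y, t)) := rfl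
    rw [this]
    exact ((hF.differentiable (by simp)).comp
      (differentiable_id.prodMk (differentiable_const t))) x
  simpa [px] using h1.hasDerivAt

private lemma sect_t {F : ℝ → ℝ → ℝ} (hF : ContDiff ℝ (⊤ : ℕ∞) (fun p : ℝ × ℝ => F p.1 p.2))
    (x t : ℝ) : HasDerivAt (F x) (pt F x t) t := by
  have h1 : DifferentiableAt ℝ (F x) t := by
    have : F x = (fun p : ℝ × ℝ => F p.1 p.2) ∘ (fun s => (x, s)) := rfl
    rw [this]
    exact ((hF.differentiable (by simp)).comp
      ((differentiable_const x).prodMk differentiable_id)) t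
  simpa [pt] using h1.hasDerivAt

private lemma px_smooth {F : ℝ → ℝ → ℝ} (hF : ContDiff ℝ (⊤ : ℕ∞) (fun p : ℝ × ℝ => F p.1 p.2)) :
    ContDiff ℝ (⊤ : ℕ∞) (fun p : ℝ × ℝ => px F p.1 p.2) := by
  have key : ∀ p : ℝ × ℝ, px F p.1 p.2
      = fderiv ℝ (fun q : ℝ × ℝ => F q.1 q.2) p (1, 0) := by
    intro p
    have hp : HasFDerivAt (fun q : ℝ × ℝ => F q.1 q.2)
        (fderiv ℝ (fun q : ℝ × ℝ => F q.1 q.2) p) p :=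
      (hF.differentiable (by simp) p).hasFDerivAt
    have hi : HasDerivAt (fun y : ℝ => (y, p.2)) ((1:ℝ), (0:ℝ)) p.1 :=
      (hasDerivAt_id p.1).prodMk (hasDerivAt_const p.1 p.2)
    have h : HasDerivAt (fun y => F y p.2)
        (fderiv ℝ (fun q : ℝ × ℝ => F q.1 q.2) p (1, 0)) p.1 :=
      by
        have hp' : HasFDerivAt (fun q : ℝ × ℝ => F q.1 q.2)
            (fderiv ℝ (fun q : ℝ × ℝ => F q.1 q.2) p) ((fun y : ℝ => (y, p.2)) p.1) := hp
        exact hp'.comp_hasDerivAt p.1 hi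
    simpa [px] using h.deriv
  have : (fun p : ℝ × ℝ => px F p.1 p.2)
      = fun p : ℝ × ℝ => fderiv ℝ (fun q : ℝ × ℝ => F q.1 q.2) p (1, 0) :=
    funext key
  rw [this]
  exact (hF.fderiv_right (m := (⊤ : ℕ∞)) (by simp)).clm_apply contDiff_const

theorem stmt_4 (f V a : ℝ) (ha : 0 < a)
    (ρ lam : ℝ → ℝ → ℝ)
    (hρ : ContDiff ℝ (⊤ : ℕ∞) (fun p : ℝ × ℝ => ρ p.1 p.2))
    (hlam : ContDiff ℝ (⊤ : ℕ∞) (fun p : ℝ × ℝ => lam p.1 p.2))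
    (φ : ℝ → ℝ → ℝ) (hφ : ∀ x t, φ x t = Real.exp (-(lam x t)))
    (hFP : ∀ x t,
      pt ρ x t + px (fun y s => (f - a * px lam y s) * ρ y s) x t
        = (a/2) * px (fun y s => px ρ y s) x t)
    (hφeq : ∀ x t,
      pt φ x t + f * px φ x t + (a/2) * px (fun y s => px φ y s) x t = V * φ x t)
    (φhat : ℝ → ℝ → ℝ) (hφhat : ∀ x t, φhat x t = ρ x t / φ x t) :
    ∀ x t,
      pt φhat x t + px (fun y s => f * φhat y s) x t
        - (a/2) * px (fun y s => px φhat y s) x t = -V * φhat x t := by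
  intro x t
  have hρx : ∀ y s, HasDerivAt (fun z => ρ z s) (px ρ y s) y := fun y s => sect_x hρ y s
  have hρt : ∀ y s, HasDerivAt (ρ y) (pt ρ y s) s := fun y s => sect_t hρ y s
  have hlx : ∀ y s, HasDerivAt (fun z => lam z s) (px lam y s) y := fun y s => sect_x hlam y s
  have hlt : ∀ y s, HasDerivAt (lam y) (pt lam y s) s := fun y s => sect_t hlam y s
  have hρxs := px_smooth hρ
  have hlxs := px_smooth hlam
  have hρxx : ∀ y s, HasDerivAt (fun z => px ρ z s) (px (fun y s => px ρ y s) y s) y :=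
    fun y s => sect_x hρxs y s
  have hlxx : ∀ y s, HasDerivAt (fun z => px lam z s) (px (fun y s => px lam y s) y s) y :=
    fun y s => sect_x hlxs y s
  have hφhat' : ∀ y s, φhat y s = ρ y s * Real.exp (lam y s) := by
    intro y s
    rw [hφhat, hφ, Real.exp_neg, div_eq_mul_inv, inv_inv]
  -- time derivative of φhat
  have e1 : pt φhat x t
      = pt ρ x t * Real.exp (lam x t) + ρ x t * (Real.exp (lam x t) * pt lam x t) := by
    have hfeq : φhat x = fun s => ρ x s * Real.exp (lam x s) := funext fun s => hφhat' x s
    show deriv (φhat x) t = _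
    rw [hfeq]
    exact ((hρt x t).mul ((hlt x t).exp)).deriv
  -- x derivative of f * φhat
  have e2 : px (fun y s => f * φhat y s) x t
      = f * (px ρ x t * Real.exp (lam x t) + ρ x t * (Real.exp (lam x t) * px lam x t)) := by
    have hfeq : (fun y => f * φhat y t)
        = fun y => f * (ρ y t * Real.exp (lam y t)) := funext fun y => by rw [hφhat']
    show deriv (fun y => f * φhat y t) x = _
    rw [hfeq]
    exact (((hρx x t).mul ((hlx x t).exp)).const_mul f).deriv
  -- first x derivative of φhat, everywhere
  have e3 : ∀ y s, px φhat y s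
      = px ρ y s * Real.exp (lam y s) + ρ y s * (Real.exp (lam y s) * px lam y s) := by
    intro y s
    have hfeq : (fun z => φhat z s) = fun z => ρ z s * Real.exp (lam z s) :=
      funext fun z => hφhat' z s
    show deriv (fun z => φhat z s) y = _
    rw [hfeq]
    exact ((hρx y s).mul ((hlx y s).exp)).deriv
  -- second x derivative of φhat
  have e4 : px (fun y s => px φhat y s) x t
      = (px (fun y s => px ρ y s) x t * Real.exp (lam x t)
          + px ρ x t * (Real.exp (lam x t) * px lam x t))
        + (px ρ x t * (Real.exp (lam x t) * px lam x t)
          + ρ x t * ((Real.exp (lam x t) * px lam x t) * px lam x t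
              + Real.exp (lam x t) * px (fun y s => px lam y s) x t)) := by
    have hfeq : (fun z => px φhat z t)
        = fun z => px ρ z t * Real.exp (lam z t)
            + ρ z t * (Real.exp (lam z t) * px lam z t) := funext fun z => e3 z t
    show deriv (fun z => px φhat z t) x = _
    rw [hfeq]
    exact (((hρxx x t).mul ((hlx x t).exp)).add
      ((hρx x t).mul (((hlx x t).exp).mul (hlxx x t)))).deriv
  -- rewrite the FP equation
  have eFP1 : px (fun y s => (f - a * px lam y s) * ρ y s) x t
      = (0 - a * px (fun y s => px lam y s) x t) * ρ x t
        + (f - a * px lam x t) * px ρ x t := by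
    show deriv (fun y => (f - a * px lam y t) * ρ y t) x = _
    exact (((hasDerivAt_const x f).sub ((hlxx x t).const_mul a)).mul (hρx x t)).deriv
  have hFP' := hFP x t
  rw [eFP1] at hFP'
  -- rewrite the φ equation
  have eφx : ∀ y s, px φ y s = Real.exp (-(lam y s)) * (-(px lam y s)) := by
    intro y s
    have hfeq : (fun z => φ z s) = fun z => Real.exp (-(lam z s)) :=
      funext fun z => hφ z s
    show deriv (fun z => φ z s) y = _
    rw [hfeq]
    exact ((hlx y s).neg).exp.deriv
  have eφxx : px (fun y s => px φ y s) x t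
      = (Real.exp (-(lam x t)) * (-(px lam x t))) * (-(px lam x t))
        + Real.exp (-(lam x t)) * (-(px (fun y s => px lam y s) x t)) := by
    have hfeq : (fun z => px φ z t)
        = fun z => Real.exp (-(lam z t)) * (-(px lam z t)) := funext fun z => eφx z t
    show deriv (fun z => px φ z t) x = _
    rw [hfeq]
    exact ((((hlx x t).neg).exp).mul ((hlxx x t).neg)).deriv
  have eφt : pt φ x t = Real.exp (-(lam x t)) * (-(pt lam x t)) := by
    have hfeq : φ x = fun s => Real.exp (-(lam x s)) := funext fun s => hφ x s
    show deriv (φ x) t = _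
    rw [hfeq]
    exact ((hlt x t).neg).exp.deriv
  have hφ' := hφeq x t
  rw [eφx x t, eφxx, eφt, hφ x t] at hφ'
  have hP : -(pt lam x t) - f * px lam x t
      + (a/2) * (px lam x t * px lam x t - px (fun y s => px lam y s) x t) = V := by
    have h2 : (-(pt lam x t) - f * px lam x t
        + (a/2) * (px lam x t * px lam x t - px (fun y s => px lam y s) x t))
          * Real.exp (-(lam x t)) = V * Real.exp (-(lam x t)) := by
      linear_combination hφ'
    exact mul_right_cancel₀ (Real.exp_ne_zero _) h2
  rw [e1, e2, e4, hφhat' x t]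
  linear_combination Real.exp (lam x t) * hFP' - ρ x t * Real.exp (lam x t) * hP
end

section
/- Let φ(x,t) = c(t)exp(-(1/2)xᵀΠ(t)x) with Π(t) symmetric differentiable and c(t) > 0 differentiable. Then φ satisfies ∂φ/∂t + (Ax)·∇φ + (1/2)∑ᵢⱼ(BBᵀ)ᵢⱼ ∂²φ/∂xᵢ∂xⱼ = (1/2)xᵀS(t)x·φ for all x if and only if -Π'(t) = AᵀΠ(t) + Π(t)A - Π(t)BBᵀΠ(t) + S(t) and c'(t) = (1/2)trace(BBᵀΠ(t))c(t). -/
/-!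
For symmetric `Π` the spatial derivatives of `φ = c exp(-½ xᵀΠx)` are
`∂ᵢφ = -(Πx)ᵢ φ` and `∂ᵢ∂ⱼφ = ((Πx)ᵢ(Πx)ⱼ - Πᵢⱼ) φ`, so after dividing by the positive factor
`exp(-½ xᵀΠx)` the residual of the equation is `c' - ½ tr(BBᵀΠ) c + (c/2) xᵀMx` with
`M = -Π' - (AᵀΠ + ΠA - ΠBBᵀΠ + S)`. Both `Π'` (a derivative of symmetric matrices) and `S` are
symmetric, hence so is `M`, and a constant plus a symmetric quadratic form vanishes identically
iff the constant and the matrix vanish.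
-/

open Matrix

noncomputable def pdt {n : ℕ} (L : (Fin n → ℝ) → ℝ → ℝ) (x : Fin n → ℝ) (t : ℝ) : ℝ :=
  deriv (L x) t

noncomputable def pdx {n : ℕ} (i : Fin n) (L : (Fin n → ℝ) → ℝ → ℝ) (x : Fin n → ℝ) (t : ℝ) : ℝ :=
  deriv (fun s => L (Function.update x i s) t) (x i)

section Calculus

variable {ι : Type*} {t : ℝ}

theorem isSymm_of_hasDerivAt_entries {P : ℝ → Matrix ι ι ℝ} {P' : Matrix ι ι ℝ}
    (hP : ∀ s, (P s).IsSymm) (hP' : ∀ i j, HasDerivAt (fun s => P s i j) (P' i j) t) :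
    P'.IsSymm :=
  IsSymm.ext_iff.2 fun i j => (hP' j i).unique <| by simpa only [(hP _).apply] using hP' i j

variable [Fintype ι]

theorem HasDerivAt.dotProduct {f g : ℝ → ι → ℝ} {f' g' : ι → ℝ}
    (hf : HasDerivAt f f' t) (hg : HasDerivAt g g' t) :
    HasDerivAt (fun s => f s ⬝ᵥ g s) (f' ⬝ᵥ g t + f t ⬝ᵥ g') t :=
  (HasDerivAt.fun_sum fun i _ => (hasDerivAt_pi.1 hf i).mul (hasDerivAt_pi.1 hg i)).congr_deriv
    (by rw [Finset.sum_add_distrib]; rfl)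

theorem HasDerivAt.const_mulVec (M : Matrix ι ι ℝ) {f : ℝ → ι → ℝ} {f' : ι → ℝ}
    (hf : HasDerivAt f f' t) : HasDerivAt (fun s => M *ᵥ f s) (M *ᵥ f') t :=
  hasDerivAt_pi.2 fun i => ((hasDerivAt_const t (M i)).dotProduct hf).congr_deriv
    (by rw [zero_dotProduct, zero_add]; rfl)

theorem hasDerivAt_mulVec_of_entries {P : ℝ → Matrix ι ι ℝ} {P' : Matrix ι ι ℝ}
    (hP : ∀ i j, HasDerivAt (fun s => P s i j) (P' i j) t) (x : ι → ℝ) :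
    HasDerivAt (fun s => P s *ᵥ x) (P' *ᵥ x) t :=
  hasDerivAt_pi.2 fun i =>
    ((hasDerivAt_pi.2 (hP i)).dotProduct (hasDerivAt_const t x)).congr_deriv (by simp [mulVec])

variable [DecidableEq ι]

theorem hasDerivAt_dotProduct_mulVec_update {Q : Matrix ι ι ℝ} (hQ : Q.IsSymm) (x : ι → ℝ)
    (i : ι) :
    HasDerivAt (fun s => Function.update x i s ⬝ᵥ Q *ᵥ Function.update x i s)
      (2 * (Q *ᵥ x) i) (x i) := by
  have h := (hasDerivAt_update x i (x i)).dotProduct ((hasDerivAt_update x i (x i)).const_mulVec Q)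
  rwa [Function.update_eq_self, single_one_dotProduct, dotProduct_mulVec, dotProduct_single_one,
    ← mulVec_transpose, hQ.eq, ← two_mul] at h

end Calculus

namespace Matrix

theorem dotProduct_transpose_mul_mulVec {l m n R : Type*} [Fintype l] [Fintype m] [Fintype n]
    [CommSemiring R] (M : Matrix l m R) (N : Matrix l n R) (x : m → R) (y : n → R) :
    x ⬝ᵥ (Mᵀ * N) *ᵥ y = (M *ᵥ x) ⬝ᵥ N *ᵥ y := by
  rw [← mulVec_mulVec, dotProduct_mulVec, ← mulVec_transpose, transpose_transpose]

theorem IsSymm.eq_zero_of_forall_dotProduct_mulVec_self {ι R : Type*} [Fintype ι] [DecidableEq ι]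
    [CommRing R] [NoZeroDivisors R] [CharZero R] {M : Matrix ι ι R} (hM : M.IsSymm)
    (h : ∀ x, x ⬝ᵥ M *ᵥ x = 0) : M = 0 := by
  ext i j
  have hij := h (Pi.single i 1 + Pi.single j 1)
  simp only [mulVec_add, dotProduct_add, add_dotProduct, mulVec_single_one, single_one_dotProduct,
    col_apply] at hij
  have hii := h (Pi.single i 1)
  have hjj := h (Pi.single j 1)
  simp only [mulVec_single_one, single_one_dotProduct, col_apply] at hii hjj
  rw [hii, hjj, hM.apply i j] at hij
  simpa using hij

theorem forall_add_mul_dotProduct_mulVec_self_eq_zero_iff {ι R : Type*} [Fintype ι]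
    [DecidableEq ι] [CommRing R] [NoZeroDivisors R] [CharZero R] {M : Matrix ι ι R}
    (hM : M.IsSymm) {a b : R} (hb : b ≠ 0) :
    (∀ x, a + b * (x ⬝ᵥ M *ᵥ x) = 0) ↔ a = 0 ∧ M = 0 := by
  refine ⟨fun h => ?_, fun ⟨ha, hM⟩ x => by simp [ha, hM]⟩
  have ha : a = 0 := by simpa using h 0
  refine ⟨ha, hM.eq_zero_of_forall_dotProduct_mulVec_self fun x => ?_⟩
  simpa [ha, hb] using h x

end Matrix

section GaussianAnsatz

variable {n : ℕ} {c : ℝ → ℝ} {P : ℝ → Matrix (Fin n) (Fin n) ℝ} {t : ℝ}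

noncomputable def gaussianAnsatz (c : ℝ → ℝ) (P : ℝ → Matrix (Fin n) (Fin n) ℝ)
    (x : Fin n → ℝ) (t : ℝ) : ℝ :=
  c t * Real.exp (-(1/2) * (x ⬝ᵥ P t *ᵥ x))

theorem hasDerivAt_gaussianAnsatz_update (hP : (P t).IsSymm) (x : Fin n → ℝ) (i : Fin n) :
    HasDerivAt (fun s => gaussianAnsatz c P (Function.update x i s) t)
      (-(P t *ᵥ x) i * gaussianAnsatz c P x t) (x i) := by
  have h := (((hasDerivAt_dotProduct_mulVec_update hP x i).const_mul (-(1/2))).exp).const_mul (c t)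
  rw [Function.update_eq_self] at h
  exact h.congr_deriv (by unfold gaussianAnsatz; ring)

theorem pdx_gaussianAnsatz (hP : (P t).IsSymm) (i : Fin n) (x : Fin n → ℝ) :
    pdx i (gaussianAnsatz c P) x t = -(P t *ᵥ x) i * gaussianAnsatz c P x t :=
  (hasDerivAt_gaussianAnsatz_update hP x i).deriv

theorem pdx_pdx_gaussianAnsatz (hP : (P t).IsSymm) (i j : Fin n) (x : Fin n → ℝ) :
    pdx i (fun y s => pdx j (gaussianAnsatz c P) y s) x t
      = ((P t *ᵥ x) i * (P t *ᵥ x) j - P t i j) * gaussianAnsatz c P x t := by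
  have hlin : HasDerivAt (fun s => -(P t *ᵥ Function.update x i s) j) (-P t j i) (x i) :=
    (hasDerivAt_pi.1 ((hasDerivAt_update x i (x i)).const_mulVec (P t)) j).neg.congr_deriv
      (by rw [mulVec_single_one]; rfl)
  have h := hlin.fun_mul (hasDerivAt_gaussianAnsatz_update (c := c) hP x i)
  rw [hP.apply] at h
  have hpdx : (fun s => pdx j (gaussianAnsatz c P) (Function.update x i s) t)
      = fun s => -(P t *ᵥ Function.update x i s) j * gaussianAnsatz c P (Function.update x i s) t :=
    funext fun s => pdx_gaussianAnsatz hP j _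
  rw [pdx, hpdx, h.deriv, Function.update_eq_self]
  ring

theorem pdt_gaussianAnsatz {c' : ℝ → ℝ} {P' : Matrix (Fin n) (Fin n) ℝ}
    (hc : HasDerivAt c (c' t) t) (hP : ∀ i j, HasDerivAt (fun s => P s i j) (P' i j) t)
    (x : Fin n → ℝ) :
    pdt (gaussianAnsatz c P) x t
      = gaussianAnsatz c' P x t - (1/2) * (x ⬝ᵥ P' *ᵥ x) * gaussianAnsatz c P x t := by
  have hq := (hasDerivAt_const t x).dotProduct (hasDerivAt_mulVec_of_entries hP x)
  rw [zero_dotProduct, zero_add] at hq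
  have h := hc.fun_mul (hq.const_mul (-(1/2))).exp
  unfold pdt gaussianAnsatz
  rw [h.deriv]
  ring

theorem generator_gaussianAnsatz_sub {c' : ℝ → ℝ} {P' : Matrix (Fin n) (Fin n) ℝ}
    (A R S : Matrix (Fin n) (Fin n) ℝ) (hc : HasDerivAt c (c' t) t)
    (hP' : ∀ i j, HasDerivAt (fun s => P s i j) (P' i j) t) (hP : (P t).IsSymm)
    (x : Fin n → ℝ) :
    pdt (gaussianAnsatz c P) x t + ∑ i, (A *ᵥ x) i * pdx i (gaussianAnsatz c P) x t
        + (1/2) * ∑ i, ∑ j, R i j * pdx i (fun y s => pdx j (gaussianAnsatz c P) y s) x t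
        - (1/2) * (x ⬝ᵥ S *ᵥ x) * gaussianAnsatz c P x t
      = (c' t - (1/2) * (R * P t).trace * c t
          + c t / 2 * (x ⬝ᵥ (-P' - (Aᵀ * P t + P t * A - P t * R * P t + S)) *ᵥ x))
        * Real.exp (-(1/2) * (x ⬝ᵥ P t *ᵥ x)) := by
  set Q := P t
  set φ := gaussianAnsatz c P x t
  have hdrift : ∑ i, (A *ᵥ x) i * (-(Q *ᵥ x) i * φ) = -((A *ᵥ x) ⬝ᵥ (Q *ᵥ x)) * φ := by
    simp only [dotProduct, Finset.sum_mul, ← Finset.sum_neg_distrib]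
    exact Finset.sum_congr rfl fun i _ => by ring
  have hdiffusion : ∑ i, ∑ j, R i j * (((Q *ᵥ x) i * (Q *ᵥ x) j - Q i j) * φ)
      = ((Q *ᵥ x) ⬝ᵥ R *ᵥ (Q *ᵥ x) - (R * Q).trace) * φ := by
    generalize Q *ᵥ x = v
    simp only [dotProduct, mulVec, trace, diag, mul_apply, Finset.sum_mul, Finset.mul_sum,
      ← Finset.sum_sub_distrib, hP.apply]
    exact Finset.sum_congr rfl fun i _ => Finset.sum_congr rfl fun j _ => by ring
  have hquad : x ⬝ᵥ (-P' - (Aᵀ * Q + Q * A - Q * R * Q + S)) *ᵥ x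
      = -(x ⬝ᵥ P' *ᵥ x) - 2 * ((A *ᵥ x) ⬝ᵥ (Q *ᵥ x)) + (Q *ᵥ x) ⬝ᵥ R *ᵥ (Q *ᵥ x)
        - x ⬝ᵥ S *ᵥ x := by
    have hQA : x ⬝ᵥ (Q * A) *ᵥ x = (A *ᵥ x) ⬝ᵥ (Q *ᵥ x) := by
      have h := dotProduct_transpose_mul_mulVec Q A x x
      rw [hP.eq] at h
      rw [h, dotProduct_comm]
    have hQRQ : x ⬝ᵥ (Q * R * Q) *ᵥ x = (Q *ᵥ x) ⬝ᵥ R *ᵥ (Q *ᵥ x) := by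
      have h := dotProduct_transpose_mul_mulVec Q (R * Q) x x
      rw [hP.eq] at h
      rw [Matrix.mul_assoc, h, ← mulVec_mulVec]
    simp only [sub_mulVec, add_mulVec, neg_mulVec, dotProduct_sub, dotProduct_add, dotProduct_neg,
      dotProduct_transpose_mul_mulVec, hQA, hQRQ]
    ring
  simp only [pdt_gaussianAnsatz hc hP', pdx_gaussianAnsatz hP, pdx_pdx_gaussianAnsatz hP]
  rw [hdrift, hdiffusion, hquad]
  unfold φ gaussianAnsatz
  ring

end GaussianAnsatz

theorem stmt_11_general (n m : ℕ)
    (A : Matrix (Fin n) (Fin n) ℝ) (B : Matrix (Fin n) (Fin m) ℝ)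
    (S : ℝ → Matrix (Fin n) (Fin n) ℝ) (hSsymm : ∀ t, (S t)ᵀ = S t)
    (P P' : ℝ → Matrix (Fin n) (Fin n) ℝ)
    (hPsymm : ∀ t, (P t)ᵀ = P t)
    (hPderiv : ∀ t, ∀ i j, HasDerivAt (fun s => P s i j) (P' t i j) t)
    (c c' : ℝ → ℝ) (hcpos : ∀ t, 0 < c t)
    (hcderiv : ∀ t, HasDerivAt c (c' t) t)
    (φ : (Fin n → ℝ) → ℝ → ℝ)
    (hφ : ∀ x t, φ x t = c t * Real.exp (-(1/2) * (x ⬝ᵥ (P t).mulVec x)))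
    (t : ℝ) :
    (∀ x : Fin n → ℝ,
      pdt φ x t + (∑ i, A.mulVec x i * pdx i φ x t)
        + (1/2) * ∑ i, ∑ j, (B * Bᵀ) i j * pdx i (fun y s => pdx j φ y s) x t
      = (1/2) * (x ⬝ᵥ (S t).mulVec x) * φ x t)
    ↔ (-P' t = Aᵀ * P t + P t * A - P t * (B * Bᵀ) * P t + S t
        ∧ c' t = (1/2) * (B * Bᵀ * P t).trace * c t) := by
  obtain rfl : φ = gaussianAnsatz c P := funext₂ hφ
  have hP' : (P' t).IsSymm := isSymm_of_hasDerivAt_entries hPsymm (hPderiv t)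
  have hRiccati : (-P' t - (Aᵀ * P t + P t * A - P t * (B * Bᵀ) * P t + S t)).IsSymm := by
    simp only [IsSymm, transpose_sub, transpose_neg, transpose_add, transpose_mul,
      transpose_transpose, hPsymm t, hSsymm t, hP'.eq, Matrix.mul_assoc]
    abel
  conv =>
    lhs; ext x
    rw [← sub_eq_zero, generator_gaussianAnsatz_sub A (B * Bᵀ) (S t) (hcderiv t) (hPderiv t)
      (hPsymm t), mul_eq_zero, or_iff_left (Real.exp_pos _).ne']
  rw [forall_add_mul_dotProduct_mulVec_self_eq_zero_iff hRiccati (half_pos (hcpos t)).ne',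
    sub_eq_zero, sub_eq_zero, and_comm]

theorem stmt_11 (n m : ℕ) (hn : 0 < n) (hm : 0 < m)
    (A : Matrix (Fin n) (Fin n) ℝ) (B : Matrix (Fin n) (Fin m) ℝ)
    (S : ℝ → Matrix (Fin n) (Fin n) ℝ) (hScont : Continuous S) (hSsymm : ∀ t, (S t)ᵀ = S t)
    (P P' : ℝ → Matrix (Fin n) (Fin n) ℝ)
    (hPsymm : ∀ t, (P t)ᵀ = P t)
    (hPderiv : ∀ t, ∀ i j, HasDerivAt (fun s => P s i j) (P' t i j) t)
    (c c' : ℝ → ℝ) (hcpos : ∀ t, 0 < c t)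
    (hcderiv : ∀ t, HasDerivAt c (c' t) t)
    (φ : (Fin n → ℝ) → ℝ → ℝ)
    (hφ : ∀ x t, φ x t = c t * Real.exp (-(1/2) * (x ⬝ᵥ (P t).mulVec x)))
    (t : ℝ) :
    (∀ x : Fin n → ℝ,
      pdt φ x t + (∑ i, A.mulVec x i * pdx i φ x t)
        + (1/2) * ∑ i, ∑ j, (B * Bᵀ) i j * pdx i (fun y s => pdx j φ y s) x t
      = (1/2) * (x ⬝ᵥ (S t).mulVec x) * φ x t)
    ↔ (-P' t = Aᵀ * P t + P t * A - P t * (B * Bᵀ) * P t + S t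
        ∧ c' t = (1/2) * (B * Bᵀ * P t).trace * c t) :=
  stmt_11_general n m A B S hSsymm P P' hPsymm hPderiv c c' hcpos hcderiv φ hφ t
end

section
/- The map (Σ, U) ↦ trace(UᵀΣ⁻¹U) is jointly convex on the set of pairs (Σ, U) with Σ ∈ Matrix (Fin n) (Fin n) ℝ symmetric positive definite and U ∈ Matrix (Fin n) (Fin m) ℝ. -/
/-!
By the Schur complement criterion, for `S` positive definite the block matrix
`[[S, U], [Uᴴ, X]]` is positive semidefinite iff `Uᴴ S⁻¹ U ≤ X` in the Loewner order. Taking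
`X = Uᴴ S⁻¹ U` and forming a convex combination of two such block matrices, which is again
positive semidefinite and depends affinely on `(S, U, X)`, shows that `(S, U) ↦ Uᴴ S⁻¹ U` is
jointly convex for the Loewner order. The trace is monotone and linear.
-/

open Matrix
open scoped ComplexOrder MatrixOrder

namespace Matrix

variable {𝕜 n m : Type*} [RCLike 𝕜]

theorem convex_setOf_posDef : Convex ℝ {A : Matrix n n 𝕜 | A.PosDef} :=
  convex_iff_forall_pos.mpr fun _ hA _ hB _ _ ha hb _ => (hA.smul ha).add (hB.smul hb)

variable [Fintype n] [DecidableEq n] [Finite m]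

theorem posSemidef_fromBlocks_conjTranspose_mul_inv_mul {S : Matrix n n 𝕜} (hS : S.PosDef)
    (U : Matrix n m 𝕜) : (fromBlocks S U Uᴴ (Uᴴ * S⁻¹ * U)).PosSemidef := by
  have := hS.isUnit.invertible
  simpa [PosDef.fromBlocks₁₁ U _ hS] using PosSemidef.zero

theorem convexOn_conjTranspose_mul_inv_mul :
    ConvexOn ℝ {p : Matrix n n 𝕜 × Matrix n m 𝕜 | p.1.PosDef} fun p => p.2ᴴ * p.1⁻¹ * p.2 := by
  refine ⟨fun x hx y hy a b ha hb hab => convex_setOf_posDef hx hy ha hb hab, ?_⟩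
  rintro ⟨S₁, U₁⟩ hS₁ ⟨S₂, U₂⟩ hS₂ a b ha hb hab
  have hS : (a • S₁ + b • S₂).PosDef := convex_setOf_posDef hS₁ hS₂ ha hb hab
  have := hS.isUnit.invertible
  simp only [Prod.smul_mk, Prod.mk_add_mk, Matrix.le_iff]
  rw [← PosDef.fromBlocks₁₁ _ _ hS, conjTranspose_add, conjTranspose_smul, conjTranspose_smul,
    star_trivial, star_trivial, ← fromBlocks_add, ← fromBlocks_smul, ← fromBlocks_smul]
  exact ((posSemidef_fromBlocks_conjTranspose_mul_inv_mul hS₁ U₁).smul ha).add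
    ((posSemidef_fromBlocks_conjTranspose_mul_inv_mul hS₂ U₂).smul hb)

end Matrix

theorem stmt_14_general (n m : ℕ)
    (Sig₁ Sig₂ : Matrix (Fin n) (Fin n) ℝ)
    (h₁ : Sig₁.PosDef) (h₂ : Sig₂.PosDef)
    (U₁ U₂ : Matrix (Fin n) (Fin m) ℝ) (t : ℝ) (ht0 : 0 ≤ t) (ht1 : t ≤ 1) :
    ((t • U₁ + (1 - t) • U₂)ᵀ * (t • Sig₁ + (1 - t) • Sig₂)⁻¹ * (t • U₁ + (1 - t) • U₂)).trace
      ≤ t * (U₁ᵀ * Sig₁⁻¹ * U₁).trace + (1 - t) * (U₂ᵀ * Sig₂⁻¹ * U₂).trace := by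
  have hconvex := convexOn_conjTranspose_mul_inv_mul.2 (x := (Sig₁, U₁)) h₁ (y := (Sig₂, U₂)) h₂
    ht0 (sub_nonneg.mpr ht1) (add_sub_cancel t 1)
  have htrace := (le_iff.mp hconvex).trace_nonneg
  simp only [Prod.smul_mk, Prod.mk_add_mk, trace_sub, trace_add, trace_smul, smul_eq_mul,
    conjTranspose_eq_transpose_of_trivial] at htrace
  linarith

theorem stmt_14 (n m : ℕ) (hn : 0 < n) (hm : 0 < m)
    (Sig₁ Sig₂ : Matrix (Fin n) (Fin n) ℝ)
    (h₁ : Sig₁.PosDef) (h₂ : Sig₂.PosDef) (hs₁ : Sig₁ᵀ = Sig₁) (hs₂ : Sig₂ᵀ = Sig₂)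
    (U₁ U₂ : Matrix (Fin n) (Fin m) ℝ) (t : ℝ) (ht0 : 0 ≤ t) (ht1 : t ≤ 1) :
    ((t • U₁ + (1 - t) • U₂)ᵀ * (t • Sig₁ + (1 - t) • Sig₂)⁻¹ * (t • U₁ + (1 - t) • U₂)).trace
      ≤ t * (U₁ᵀ * Sig₁⁻¹ * U₁).trace + (1 - t) * (U₂ᵀ * Sig₂⁻¹ * U₂).trace :=
  stmt_14_general n m Sig₁ Sig₂ h₁ h₂ U₁ U₂ t ht0 ht1
end

section
/- Suppose a > 0 is a constant, and φ, φ̂ : ℝ × [0,T] → ℝ are smooth with φ satisfying ∂φ/∂t + (a/2)∂²φ/∂x² = Vφ and φ̂ satisfying ∂φ̂/∂t - (a/2)∂²φ̂/∂x² = -Vφ̂ (with V : ℝ × [0,T] → ℝ continuous). Then ρ := φ·φ̂ satisfies ∂ρ/∂t + ∂/∂x(a (∂log φ/∂x) ρ) = (a/2) ∂²ρ/∂x², wherever φ > 0. -/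
theorem stmt_16 (a T : ℝ) (ha : 0 < a) (hT : 0 < T)
    (V φ φhat : ℝ → ℝ → ℝ)
    (hV : Continuous (fun p : ℝ × ℝ => V p.1 p.2))
    (hφ : ContDiff ℝ (⊤ : ℕ∞) (fun p : ℝ × ℝ => φ p.1 p.2))
    (hφhat : ContDiff ℝ (⊤ : ℕ∞) (fun p : ℝ × ℝ => φhat p.1 p.2))
    (hφpos : ∀ x : ℝ, ∀ t ∈ Set.Icc 0 T, 0 < φ x t)
    (hφeq : ∀ x : ℝ, ∀ t ∈ Set.Icc 0 T,
      pt φ x t + (a/2) * px (fun y s => px φ y s) x t = V x t * φ x t)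
    (hφhateq : ∀ x : ℝ, ∀ t ∈ Set.Icc 0 T,
      pt φhat x t - (a/2) * px (fun y s => px φhat y s) x t = -(V x t) * φhat x t)
    (ρ : ℝ → ℝ → ℝ) (hρ : ∀ x t, ρ x t = φ x t * φhat x t) :
    ∀ x : ℝ, ∀ t ∈ Set.Icc 0 T,
      pt ρ x t + px (fun y s => a * (px φ y s / φ y s) * ρ y s) x t
        = (a/2) * px (fun y s => px ρ y s) x t := by
  intro x t ht
  -- smoothness of slices
  have hg : ContDiff ℝ ((⊤ : ℕ∞) : WithTop ℕ∞) (fun y => φ y t) :=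
    (hφ.comp (contDiff_id.prodMk contDiff_const)).of_le (by simp)
  have hh : ContDiff ℝ ((⊤ : ℕ∞) : WithTop ℕ∞) (fun y => φhat y t) :=
    (hφhat.comp (contDiff_id.prodMk contDiff_const)).of_le (by simp)
  have hgx : ContDiff ℝ (⊤ : ℕ∞) (fun s => φ x s) := hφ.comp (contDiff_const.prodMk contDiff_id)
  have hhx : ContDiff ℝ (⊤ : ℕ∞) (fun s => φhat x s) := hφhat.comp (contDiff_const.prodMk contDiff_id)
  have dg : Differentiable ℝ (fun y => φ y t) := hg.differentiable (by simp)
  have dh : Differentiable ℝ (fun y => φhat y t) := hh.differentiable (by simp)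
  have dg' : Differentiable ℝ (deriv (fun y => φ y t)) :=
    ((contDiff_infty_iff_deriv.mp hg).2).differentiable (by simp)
  have dh' : Differentiable ℝ (deriv (fun y => φhat y t)) :=
    ((contDiff_infty_iff_deriv.mp hh).2).differentiable (by simp)
  have dgx : Differentiable ℝ (fun s => φ x s) := hgx.differentiable (by simp)
  have dhx : Differentiable ℝ (fun s => φhat x s) := hhx.differentiable (by simp)
  -- time derivative of ρ
  have e1 : pt ρ x t = deriv (fun s => φ x s) t * φhat x t
      + φ x t * deriv (fun s => φhat x s) t := by
    have h1 : ρ x = fun s => φ x s * φhat x s := funext fun s => hρ x s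
    rw [pt, h1]
    exact deriv_mul (dgx t) (dhx t)
  -- current term
  have e2 : px (fun y s => a * (px φ y s / φ y s) * ρ y s) x t
      = a * (deriv (deriv (fun y => φ y t)) x * φhat x t
        + deriv (fun y => φ y t) x * deriv (fun y => φhat y t) x) := by
    have hfun : (fun y => a * (deriv (fun z => φ z t) y / φ y t) * ρ y t)
        = fun y => a * (deriv (fun z => φ z t) y * φhat y t) := by
      funext y
      rw [hρ]
      field_simp [ne_of_gt (hφpos y t ht)]
    simp only [px]
    rw [hfun, deriv_const_mul _ ((dg'.differentiableAt).fun_mul (dh.differentiableAt))]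
    rw [deriv_fun_mul (dg'.differentiableAt) (dh.differentiableAt)]
  -- second space derivative of ρ
  have e3 : px (fun y s => px ρ y s) x t
      = deriv (deriv (fun y => φ y t)) x * φhat x t
        + 2 * (deriv (fun y => φ y t) x * deriv (fun y => φhat y t) x)
        + φ x t * deriv (deriv (fun y => φhat y t)) x := by
    have hfun : (fun y => deriv (fun z => ρ z t) y)
        = fun y => deriv (fun z => φ z t) y * φhat y t
          + φ y t * deriv (fun z => φhat z t) y := by
      funext y
      have h1 : (fun z => ρ z t) = fun z => φ z t * φhat z t := funext fun z => hρ z t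
      rw [h1]
      exact deriv_mul (dg y) (dh y)
    simp only [px]
    rw [hfun, deriv_fun_add ((dg'.differentiableAt).fun_mul (dh.differentiableAt))
        ((dg.differentiableAt).fun_mul (dh'.differentiableAt)),
      deriv_fun_mul (dg'.differentiableAt) (dh.differentiableAt),
      deriv_fun_mul (dg.differentiableAt) (dh'.differentiableAt)]
    ring
  -- PDE hypotheses in explicit form
  have h1 := hφeq x t ht
  have h2 := hφhateq x t ht
  simp only [px, pt] at h1 h2
  rw [e1, e2, e3]
  linear_combination φhat x t * h1 + φ x t * h2
end

section
/- In one dimension with A = a ∈ ℝ, B = b ≠ 0, S ≡ 0: the coupled scalar Riccati system -π' = 2aπ - b²π², -h' = 2ah + b²h², with boundary conditions π(0)+h(0) = 1/σ₀ and π(T)+h(T) = 1/σ_T (σ₀, σ_T > 0), has a solution, i.e. there exist differentiable functions π, h : [0,T] → ℝ satisfying the two ODEs and the two boundary conditions. -/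
theorem stmt_19 (a b σ₀ σT T : ℝ) (hb : b ≠ 0) (hσ₀ : 0 < σ₀) (hσT : 0 < σT) (hT : 0 < T) :
    ∃ π h : ℝ → ℝ,
      (∀ t ∈ Set.Icc 0 T, HasDerivAt π (-(2 * a * π t - b ^ 2 * (π t) ^ 2)) t)
      ∧ (∀ t ∈ Set.Icc 0 T, HasDerivAt h (-(2 * a * h t + b ^ 2 * (h t) ^ 2)) t)
      ∧ π 0 + h 0 = 1 / σ₀ ∧ π T + h T = 1 / σT := by
  set J : ℝ → ℝ := fun t => if a = 0 then t else (1 - Real.exp (-2*a*t))/(2*a) with hJdef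
  have hJderiv : ∀ t, HasDerivAt J (Real.exp (-2*a*t)) t := by
    intro t
    by_cases ha : a = 0
    · simp only [hJdef, ha]
      simpa using hasDerivAt_id' t
    · simp only [hJdef, if_neg ha]
      have h1 : HasDerivAt (fun t : ℝ => -2*a*t) (-2*a) t := by
        simpa using (hasDerivAt_id t).const_mul (-2*a)
      have h2 := ((hasDerivAt_const t (1:ℝ)).sub h1.exp).div_const (2*a)
      refine h2.congr_deriv ?_
      field_simp
      ring
  have hJ0 : J 0 = 0 := by by_cases ha : a = 0 <;> simp [hJdef, ha]
  have hJmono : StrictMono J := strictMono_of_deriv_pos (fun x => by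
    rw [(hJderiv x).deriv]; positivity)
  have hJT : 0 < J T := by have := hJmono hT; rwa [hJ0] at this
  set F := Real.exp (-2*a*T) with hF
  have hFpos : 0 < F := Real.exp_pos _
  set s₀ := 1/σ₀ with hs₀
  set sT := 1/σT with hsT
  have hs₀pos : 0 < s₀ := by rw [hs₀]; positivity
  have hsTpos : 0 < sT := by rw [hsT]; positivity
  have hb2 : 0 < b^2 := by positivity
  set β := b^2 * J T with hβ
  have hβpos : 0 < β := by rw [hβ]; exact mul_pos hb2 hJT
  have hβ2 : 0 < β^2 := by positivity
  have h4 : 0 < 4*s₀*F*σT/β^2 := div_pos (by have := mul_pos (mul_pos hs₀pos hFpos) hσT; linarith) hβ2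
  have hArg : 0 < s₀^2 + 4*s₀*F*σT/β^2 := by nlinarith [sq_nonneg s₀]
  set r := Real.sqrt (s₀^2 + 4*s₀*F*σT/β^2) with hrdef
  have hr2 : r^2 = s₀^2 + 4*s₀*F*σT/β^2 := Real.sq_sqrt hArg.le
  have hrpos : 0 < r := Real.sqrt_pos.mpr hArg
  have hrgt : s₀ < r := by nlinarith [hr2, h4, hrpos, hs₀pos]
  have hr2' : β^2*r^2 = β^2*s₀^2 + 4*s₀*F*σT := by
    have h5 := hr2
    field_simp at h5
    linarith
  set q := 2/β - r with hq
  set u := (s₀ + q)/2 with hu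
  set v := (s₀ - q)/2 with hv
  have hsum : u + v = s₀ := by rw [hu, hv]; ring
  have hD1 : 1 - β*u = β*(r - s₀)/2 := by
    rw [hu, hq]; field_simp; ring
  have hD2 : 1 + β*v = β*(r + s₀)/2 := by
    rw [hv, hq]; field_simp; ring
  have hD1pos : 0 < 1 - β*u := by
    rw [hD1]
    have h1 : 0 < r - s₀ := by linarith
    positivity
  have hD2pos : 0 < 1 + β*v := by
    rw [hD2]
    have h1 : 0 < r + s₀ := by linarith
    positivity
  have hden1 : ∀ t ∈ Set.Icc (0:ℝ) T, 0 < 1 - b^2*u*J t := by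
    intro t ht
    have h0t : 0 ≤ J t := by have := hJmono.monotone ht.1; rwa [hJ0] at this
    have htT : J t ≤ J T := hJmono.monotone ht.2
    rcases le_or_gt 0 (b^2*u) with hc | hc
    · have h1 : b^2*u*J t ≤ b^2*u*J T := mul_le_mul_of_nonneg_left htT hc
      have h2 : b^2*u*J T = β*u := by rw [hβ]; ring
      linarith
    · have h1 : b^2*u*J t ≤ 0 := mul_nonpos_of_nonpos_of_nonneg hc.le h0t
      linarith
  have hden2 : ∀ t ∈ Set.Icc (0:ℝ) T, 0 < 1 + b^2*v*J t := by
    intro t ht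
    have h0t : 0 ≤ J t := by have := hJmono.monotone ht.1; rwa [hJ0] at this
    have htT : J t ≤ J T := hJmono.monotone ht.2
    rcases le_or_gt 0 (b^2*v) with hc | hc
    · have h1 : 0 ≤ b^2*v*J t := mul_nonneg hc h0t
      linarith
    · have h1 : b^2*v*J T ≤ b^2*v*J t := mul_le_mul_of_nonpos_left htT hc.le
      have h2 : b^2*v*J T = β*v := by rw [hβ]; ring
      linarith
  refine ⟨fun t => u * Real.exp (-2*a*t) / (1 - b^2*u*J t),
          fun t => v * Real.exp (-2*a*t) / (1 + b^2*v*J t), ?_, ?_, ?_, ?_⟩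
  · intro t ht
    have hDne : (1 - b^2*u*J t) ≠ 0 := (hden1 t ht).ne'
    have h1 : HasDerivAt (fun t : ℝ => -2*a*t) (-2*a) t := by
      simpa using (hasDerivAt_id t).const_mul (-2*a)
    have hN : HasDerivAt (fun t : ℝ => u * Real.exp (-2*a*t))
        (u * (Real.exp (-2*a*t) * (-2*a))) t := h1.exp.const_mul u
    have hDd : HasDerivAt (fun t : ℝ => 1 - b^2*u*J t)
        (0 - b^2*u * Real.exp (-2*a*t)) t :=
      (hasDerivAt_const t 1).sub ((hJderiv t).const_mul (b^2*u))
    have h3 := hN.div hDd hDne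
    refine h3.congr_deriv ?_
    field_simp
    ring
  · intro t ht
    have hDne : (1 + b^2*v*J t) ≠ 0 := (hden2 t ht).ne'
    have h1 : HasDerivAt (fun t : ℝ => -2*a*t) (-2*a) t := by
      simpa using (hasDerivAt_id t).const_mul (-2*a)
    have hN : HasDerivAt (fun t : ℝ => v * Real.exp (-2*a*t))
        (v * (Real.exp (-2*a*t) * (-2*a))) t := h1.exp.const_mul v
    have hDd : HasDerivAt (fun t : ℝ => 1 + b^2*v*J t)
        (0 + b^2*v * Real.exp (-2*a*t)) t :=
      (hasDerivAt_const t 1).add ((hJderiv t).const_mul (b^2*v))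
    have h3 := hN.div hDd hDne
    refine h3.congr_deriv ?_
    field_simp
    ring
  · simp only [hJ0, mul_zero, sub_zero, add_zero, zero_mul, Real.exp_zero, mul_one, div_one]
    exact hsum
  · have e1 : b^2*u*J T = β*u := by rw [hβ]; ring
    have e2 : b^2*v*J T = β*v := by rw [hβ]; ring
    have hnum : u*(1 + β*v) + v*(1 - β*u) = s₀ := by linear_combination hsum
    have key : (1 - β*u)*(1 + β*v) = s₀*F*σT := by
      rw [hD1, hD2]
      linear_combination hr2'/4
    have hD1ne : (1 - β*u) ≠ 0 := hD1pos.ne'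
    have hD2ne : (1 + β*v) ≠ 0 := hD2pos.ne'
    show u * Real.exp (-2*a*T) / (1 - b^2*u*J T) + v * Real.exp (-2*a*T) / (1 + b^2*v*J T) = sT
    rw [← hF, e1, e2, hsT, div_add_div _ _ hD1ne hD2ne,
      div_eq_div_iff (mul_ne_zero hD1ne hD2ne) hσT.ne']
    linear_combination σT*F*hnum - key
end
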